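/- Let B* ⊂ ℤ^n be a free commutative monoid with basis {b_1,…,b_k} (i.e., every element of B* has a unique representation as a nonnegative integer combination of the b_i). Then b_1,…,b_k are linearly independent over ℝ; in particular k ≤ n. -/

import Mathlib

/-- An integer relation `∑ gᵢ vᵢ = 0` splits into two natural-number combinations with equal
sums, `∑ gᵢ⁺ vᵢ = ∑ gᵢ⁻ vᵢ`; injectivity forces `g⁺ = g⁻`, i.e. `g = 0`. -/
theorem linearIndependent_int_of_injective_sum_nsmul {ι M : Type*} [Fintype ι]
    [AddCommGroup M] {v : ι → M} (hv : Function.Injective fun c : ι → ℕ => ∑ i, c i • v i) :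
    LinearIndependent ℤ v := by
  rw [Fintype.linearIndependent_iff]
  intro g hg i
  have hsums : ∑ j, (g j).toNat • v j = ∑ j, (-g j).toNat • v j := by
    rw [← sub_eq_zero, ← hg, ← Finset.sum_sub_distrib]
    refine Finset.sum_congr rfl fun j _ => ?_
    rw [← natCast_zsmul, ← natCast_zsmul, ← sub_smul, Int.toNat_sub_toNat_neg]
  have hparts := congrFun (hv hsums) i
  omega

/-- if b_1, …, b_k ∈ ℤ^n is the basis of a free commutative
    monoid (every nonnegative-integer combination has unique coefficients),
    then b_1, …, b_k are linearly independent over ℝ; in particular k ≤ n. -/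
theorem free_monoid_basis_linearIndependent (n k : ℕ) (b : Fin k → (Fin n → ℤ))
    (hfree : ∀ c d : Fin k → ℕ,
      (∑ i, c i • b i) = (∑ i, d i • b i) → c = d) :
    LinearIndependent ℝ (fun i => (fun j => ((b i j : ℝ)))) ∧ k ≤ n := by
  have hℤ : LinearIndependent ℤ b := linearIndependent_int_of_injective_sum_nsmul hfree
  have hℝ : LinearIndependent ℝ (fun i => (fun j => ((b i j : ℝ)))) :=
    (linearIndependent_algebraMap_comp_iff (S := ℝ) (v := b)).mpr hℤ
  refine ⟨hℝ, ?_⟩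
  simpa using hℝ.fintype_card_le_finrank
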